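/- With V_n and P_n as above, for all n ≥ 0: P_n = Σ_{i=0}^{n} (−1)^{n−i} · ([2i+2]/[n+i+2]) · [2n+1 choose n+1+i] · V_i, where [i] = (v^i − v^{−i})/(v − v^{−1}) and [a choose b] is the balanced q-binomial coefficient. -/

import Mathlib

/-- `v`, an indeterminate, as an element of the field `ℚ(v)` of rational functions. -/
noncomputable def vv : RatFunc ℚ := RatFunc.X

/-- The balanced `q`-integer `{m} = v^m - v^{-m}`. -/
noncomputable def bk (m : ℤ) : RatFunc ℚ := vv ^ m - vv ^ (-m)

/-- The falling product `{a}_i = {a}{a-1}⋯{a-i+1}`. -/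
noncomputable def bkp (a : ℤ) (i : ℕ) : RatFunc ℚ := ∏ j ∈ Finset.range i, bk (a - j)

/-- The balanced factorial `{n}! = {n}{n-1}⋯{1}`. -/
noncomputable def bfact (n : ℕ) : RatFunc ℚ := bkp n n

/-- The balanced binomial coefficient `[a choose b] = {a}_b / {b}!`. -/
noncomputable def bbinom (a : ℤ) (b : ℕ) : RatFunc ℚ := bkp a b / bfact b

/-- Chebyshev-type polynomials `V_0 = 1`, `V_1 = x`, `V_n = x V_{n-1} - V_{n-2}`. -/
noncomputable def chebV : ℕ → Polynomial (RatFunc ℚ)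
  | 0 => 1
  | 1 => Polynomial.X
  | (n + 2) => Polynomial.X * chebV (n + 1) - chebV n

/-- `P_n = ∏_{i=0}^{n-1} (x - v^{2i+1} - v^{-2i-1})`. -/
noncomputable def PP (n : ℕ) : Polynomial (RatFunc ℚ) :=
  ∏ i ∈ Finset.range n,
    (Polynomial.X - Polynomial.C (vv ^ (2 * i + 1) + vv ^ (-(2 * (i : ℤ) + 1))))

/-!
Multiplying `P_n = ∑ c(n, i) V_i` by `x - (v^{2n+1} + v^{-2n-1})` and using
`x V_i = V_{i+1} + V_{i-1}` shows that the coefficients must satisfy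
`c(n+1, j) = c(n, j-1) + c(n, j+1) - (v^{2n+1} + v^{-2n-1}) c(n, j)`.
The claimed coefficient is `(-1)^{n-i} {2i+2} {2n+1}! / ({n+i+2}! {n-i}!)`; reading `1/{m}!`
as `0` for `m < 0`, this formula makes sense for every integer `i`, vanishes outside
`0 ≤ i ≤ n`, and satisfies the recurrence for every integer `j`: after cancelling the common
factor, the recurrence is a Laurent polynomial identity in `v^j` and `v^{n-j}`.
-/

open Polynomial Finset

lemma vv_ne_zero : vv ≠ 0 := RatFunc.X_ne_zero

lemma intDegree_vv_zpow (m : ℤ) : (vv ^ m).intDegree = m := by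
  have hnat (k : ℕ) : (vv ^ k).intDegree = k := by
    rw [vv, ← RatFunc.algebraMap_X, ← map_pow, RatFunc.intDegree_polynomial, natDegree_X_pow]
  obtain ⟨k, rfl | rfl⟩ := Int.eq_nat_or_neg m
  · rw [zpow_natCast, hnat]
  · rw [zpow_neg, RatFunc.intDegree_inv, zpow_natCast, hnat]

lemma bk_zero : bk 0 = 0 := by simp [bk]

lemma bk_ne_zero {m : ℤ} (hm : m ≠ 0) : bk m ≠ 0 := by
  intro h
  have := congrArg RatFunc.intDegree (sub_eq_zero.mp h)
  rw [intDegree_vv_zpow, intDegree_vv_zpow] at this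
  omega

lemma bkp_add (a : ℤ) (b c : ℕ) : bkp a (b + c) = bkp a b * bkp (a - b) c := by
  simp only [bkp, prod_range_add, Nat.cast_add, sub_add_eq_sub_sub]

lemma bfact_eq_bk_mul {m m' : ℕ} (h : m' = m + 1) : bfact m' = bk m' * bfact m := by
  subst h
  rw [bfact, bkp, prod_range_succ', bfact, bkp]
  push_cast
  simp only [add_sub_add_right_eq_sub, sub_zero, mul_comm]

lemma bfact_ne_zero (m : ℕ) : bfact m ≠ 0 := by
  induction m with
  | zero => simp [bfact, bkp]
  | succ k ih => rw [bfact_eq_bk_mul rfl]; exact mul_ne_zero (bk_ne_zero (by omega)) ih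

lemma bbinom_eq_div {a b : ℕ} (h : b ≤ a) :
    bbinom a b = bfact a / (bfact b * bfact (a - b)) := by
  have : bfact a = bkp a b * bfact (a - b) := by
    rw [bfact, bfact, Nat.cast_sub h, ← bkp_add, Nat.add_sub_cancel' h]
  rw [bbinom, this, mul_comm (bfact b), ← div_div, mul_div_cancel_right₀ _ (bfact_ne_zero _)]

noncomputable def bfactInv (m : ℤ) : RatFunc ℚ := if m < 0 then 0 else (bfact m.toNat)⁻¹

lemma bfactInv_natCast (k : ℕ) : bfactInv k = (bfact k)⁻¹ := by
  simp [bfactInv]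

lemma bfactInv_of_neg {m : ℤ} (hm : m < 0) : bfactInv m = 0 := if_pos hm

lemma bfactInv_eq_bk_mul {m m' : ℤ} (h : m' = m + 1) : bfactInv m = bk m' * bfactInv m' := by
  subst h
  rcases lt_trichotomy m (-1) with hm | rfl | hm
  · rw [bfactInv_of_neg (by omega), bfactInv_of_neg (by omega), mul_zero]
  · rw [bfactInv_of_neg (by omega), neg_add_cancel, bk_zero, zero_mul]
  · obtain ⟨k, rfl⟩ := Int.eq_ofNat_of_zero_le (by omega : 0 ≤ m)
    rw [← Nat.cast_succ, bfactInv_natCast, bfactInv_natCast, bfact_eq_bk_mul rfl, mul_inv,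
      ← mul_assoc, mul_inv_cancel₀ (bk_ne_zero (by omega)), one_mul]

lemma neg_one_zpow_eq_neg {K : Type*} [DivisionRing K] {k l : ℤ} (h : Odd (k - l)) :
    (-1 : K) ^ k = -(-1) ^ l := by
  rw [← sub_add_cancel k l, zpow_add₀ (by norm_num), h.neg_one_zpow, neg_one_mul]

-- The recurrence `chebCoeff_succ`, divided by its common factor.
lemma bk_recurrence_identity (n : ℕ) (j : ℤ) :
    bk (2 * j + 2) * bk (2 * n + 3) * bk (2 * n + 2) =
      bk (2 * j) * bk (n + j + 2) * bk (n + j + 3) + bk (2 * j + 4) * bk (n - j) * bk (n - j + 1) +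
      (vv ^ (2 * n + 1) + vv ^ (-(2 * (n : ℤ) + 1))) * bk (2 * j + 2) * bk (n + j + 3) *
        bk (n - j + 1) := by
  rw [← zpow_natCast]
  push_cast
  obtain ⟨d, hd⟩ : ∃ d, (n : ℤ) = j + d := ⟨n - j, by ring⟩
  rw [hd]
  have hv := vv_ne_zero
  simp only [bk, add_sub_cancel_left, neg_add, mul_add, zpow_add₀ hv, zpow_neg, zpow_mul',
    zpow_ofNat]
  have ha : vv ^ j ≠ 0 := zpow_ne_zero _ hv
  have hb : vv ^ d ≠ 0 := zpow_ne_zero _ hv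
  generalize vv ^ j = a at *
  generalize vv ^ d = b at *
  field_simp
  ring

noncomputable def chebCoeff (n : ℕ) (i : ℤ) : RatFunc ℚ :=
  (-1) ^ ((n : ℤ) - i) * bk (2 * i + 2) * bfact (2 * n + 1) * bfactInv (n + i + 2) *
    bfactInv (n - i)

lemma chebCoeff_succ (n : ℕ) (j : ℤ) :
    chebCoeff (n + 1) j = chebCoeff n (j - 1) + chebCoeff n (j + 1) -
      (vv ^ (2 * n + 1) + vv ^ (-(2 * (n : ℤ) + 1))) * chebCoeff n j := by
  have hF₁ : bfactInv (n + j + 2) = bk (n + j + 3) * bfactInv (n + j + 3) :=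
    bfactInv_eq_bk_mul (by ring)
  have hF₂ : bfactInv (n + (j - 1) + 2) =
      bk (n + j + 2) * (bk (n + j + 3) * bfactInv (n + j + 3)) := by
    rw [bfactInv_eq_bk_mul (m' := n + j + 2) (by ring), ← hF₁]
  have hG₁ : bfactInv (n - j) = bk (n - j + 1) * bfactInv (n - j + 1) := bfactInv_eq_bk_mul rfl
  have hG₂ : bfactInv (n - (j + 1)) = bk (n - j) * (bk (n - j + 1) * bfactInv (n - j + 1)) := by
    rw [bfactInv_eq_bk_mul (m' := n - j) (by ring), ← hG₁]
  have hK : bfact (2 * (n + 1) + 1) =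
      bk (2 * (n + 1) + 1 : ℕ) * (bk (2 * n + 2 : ℕ) * bfact (2 * n + 1)) := by
    rw [bfact_eq_bk_mul (m := 2 * n + 2) (by ring), bfact_eq_bk_mul (m' := 2 * n + 2) rfl]
  have hs₁ : (-1 : RatFunc ℚ) ^ ((n : ℤ) + 1 - j) = -(-1) ^ ((n : ℤ) - j) :=
    neg_one_zpow_eq_neg ⟨0, by ring⟩
  have hs₂ : (-1 : RatFunc ℚ) ^ ((n : ℤ) - (j - 1)) = -(-1) ^ ((n : ℤ) - j) :=
    neg_one_zpow_eq_neg ⟨0, by ring⟩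
  have hs₃ : (-1 : RatFunc ℚ) ^ ((n : ℤ) - (j + 1)) = -(-1) ^ ((n : ℤ) - j) :=
    neg_one_zpow_eq_neg ⟨-1, by ring⟩
  simp only [chebCoeff, hF₁, hF₂, hG₁, hG₂, hK]
  push_cast
  rw [hs₁, hs₂, hs₃]
  linear_combination (norm := ring_nf)
    (-(-1) ^ ((n : ℤ) - j) * bfact (2 * n + 1) * bfactInv (n + j + 3) * bfactInv (n - j + 1)) *
      bk_recurrence_identity n j

lemma chebCoeff_neg_one (n : ℕ) : chebCoeff n (-1) = 0 := by
  simp [chebCoeff, bk_zero]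

lemma chebCoeff_of_lt {n : ℕ} {i : ℤ} (h : n < i) : chebCoeff n i = 0 := by
  rw [chebCoeff, bfactInv_of_neg (show (n : ℤ) - i < 0 by omega), mul_zero]

lemma chebCoeff_self (n : ℕ) : chebCoeff n n = 1 := by
  have h : bfactInv (n + n + 2) = (bk (2 * n + 2) * bfact (2 * n + 1))⁻¹ := by
    rw [show (n : ℤ) + n + 2 = (2 * n + 2 : ℕ) by push_cast; ring, bfactInv_natCast,
      bfact_eq_bk_mul (m' := 2 * n + 2) (m := 2 * n + 1) rfl]
    norm_cast
  rw [chebCoeff, h, sub_self, zpow_zero, one_mul,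
    mul_inv_cancel₀ (mul_ne_zero (bk_ne_zero (by omega)) (bfact_ne_zero _)), one_mul]
  simp [bfactInv, bfact, bkp]

lemma chebCoeff_natCast {n i : ℕ} (h : i ≤ n) :
    chebCoeff n i = (-1) ^ (n - i) * (bk (2 * i + 2) / bk ((n : ℤ) + i + 2)) *
      bbinom (2 * n + 1) (n + 1 + i) := by
  have hbinom : bbinom (2 * n + 1) (n + 1 + i) =
      bfact (2 * n + 1) / (bfact (n + 1 + i) * bfact (n - i)) := by
    rw [show (2 * n + 1 : ℤ) = (2 * n + 1 : ℕ) by push_cast; ring, bbinom_eq_div (by omega),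
      show 2 * n + 1 - (n + 1 + i) = n - i by omega]
  have hfact : bfactInv (n + i + 2) = (bk (n + i + 2) * bfact (n + 1 + i))⁻¹ := by
    rw [show (n : ℤ) + i + 2 = (n + 1 + i + 1 : ℕ) by push_cast; ring, bfactInv_natCast,
      bfact_eq_bk_mul rfl]
  rw [chebCoeff, hfact, ← Nat.cast_sub h, bfactInv_natCast, zpow_natCast, hbinom]
  ring

lemma X_mul_chebV_succ (i : ℕ) : X * chebV (i + 1) = chebV (i + 2) + chebV i := by
  rw [chebV]; ring

lemma X_mul_sum_chebV (c : ℤ → RatFunc ℚ) (n : ℕ) (h₀ : c (-1) = 0) (h₁ : c (n + 1) = 0)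
    (h₂ : c (n + 2) = 0) :
    X * ∑ i ∈ range (n + 1), C (c i) * chebV i =
      ∑ i ∈ range (n + 2), C (c (i - 1) + c (i + 1)) * chebV i := by
  simp only [C_add, add_mul, sum_add_distrib, mul_sum]
  have hlow : ∑ i ∈ range (n + 2), C (c (i - 1)) * chebV i =
      ∑ i ∈ range (n + 1), C (c i) * chebV (i + 1) := by
    rw [sum_range_succ']
    simp only [Nat.cast_zero, zero_sub, h₀, map_zero, zero_mul, add_zero, Nat.cast_succ,
      add_sub_cancel_right]
  have hhigh : ∑ i ∈ range (n + 2), C (c (i + 1)) * chebV i =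
      ∑ i ∈ range n, C (c (i + 1)) * chebV i := by
    rw [sum_range_succ, sum_range_succ]
    push_cast
    simp only [h₁, map_zero, zero_mul, add_zero, add_assoc, Int.reduceAdd, h₂]
  rw [hlow, hhigh, sum_range_succ', sum_range_succ' (fun i => C (c i) * chebV (i + 1))]
  simp only [mul_left_comm X, X_mul_chebV_succ, mul_add, sum_add_distrib]
  simp only [Nat.cast_add, Nat.cast_one, Nat.cast_zero, chebV, mul_one]
  ring

lemma PP_eq_sum_chebCoeff (n : ℕ) :
    PP n = ∑ i ∈ range (n + 1), C (chebCoeff n i) * chebV i := by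
  induction n with
  | zero => simpa [PP, chebV] using congrArg C (chebCoeff_self 0).symm
  | succ n ih =>
    set β := vv ^ (2 * n + 1) + vv ^ (-(2 * (n : ℤ) + 1))
    have hβ : C β * ∑ i ∈ range (n + 1), C (chebCoeff n i) * chebV i =
        ∑ i ∈ range (n + 2), C (β * chebCoeff n i) * chebV i := by
      rw [sum_range_succ _ (n + 1), mul_sum]
      simp only [map_mul, mul_assoc, Nat.cast_succ, chebCoeff_of_lt (lt_add_one _), mul_zero,
        map_zero, zero_mul, add_zero]
    rw [PP, prod_range_succ, ← PP, ih, mul_sub, mul_comm,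
      X_mul_sum_chebV _ _ (chebCoeff_neg_one n) (chebCoeff_of_lt (by omega))
        (chebCoeff_of_lt (by omega)),
      mul_comm, hβ, ← sum_sub_distrib]
    refine sum_congr rfl fun i _ => ?_
    rw [← sub_mul, ← C_sub, chebCoeff_succ]

theorem stmt4 (n : ℕ) :
    PP n = ∑ i ∈ Finset.range (n + 1),
      Polynomial.C ((-1 : RatFunc ℚ) ^ (n - i) * (bk (2 * i + 2) / bk ((n : ℤ) + i + 2)) *
          bbinom (2 * n + 1) (n + 1 + i)) * chebV i := by
  rw [PP_eq_sum_chebCoeff]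
  refine sum_congr rfl fun i hi => ?_
  rw [chebCoeff_natCast (Nat.lt_succ_iff.mp (mem_range.mp hi))]
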